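/- arXiv:2507.05642 — 3 statements merged into one kernel-verified Lean document; each statement's English description precedes it below -/
import Mathlib

section
/- For any integer n ≥ 2, there does not exist a quantum Latin square of order n with cardinality n+1. -/
noncomputable section

/-- The `n`-dimensional complex Hilbert space `ℋ_n`. -/
abbrev Hs (n : ℕ) := EuclideanSpace ℂ (Fin n)

/-- Two vectors are identified when they differ by a global phase `e^{iθ}`. -/
def PhaseEq {E : Type*} [AddCommGroup E] [Module ℂ E] (u v : E) : Prop :=
  ∃ θ : ℝ, u = Complex.exp (θ * Complex.I) • v

/-- A quantum Latin square of order `n`: each row and each column is an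
orthonormal family of `n` vectors in `ℋ_n`, hence an orthonormal basis. -/
def IsQLS {n : ℕ} (M : Fin n → Fin n → Hs n) : Prop :=
  (∀ i, Orthonormal ℂ (fun j => M i j)) ∧ (∀ j, Orthonormal ℂ (fun i => M i j))

/-- The family `f` has exactly `c` distinct members up to global phase. -/
def FamCardEq {ι E : Type*} [AddCommGroup E] [Module ℂ E] (f : ι → E) (c : ℕ) : Prop :=
  ∃ reps : Fin c → E,
    (∀ i, ∃ k, PhaseEq (f i) (reps k)) ∧
    (∀ k, ∃ i, PhaseEq (f i) (reps k)) ∧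
    (∀ k l, k ≠ l → ¬ PhaseEq (reps k) (reps l))

/-- The cardinality of a quantum Latin square is `c`. -/
def CardEq {n : ℕ} (M : Fin n → Fin n → Hs n) (c : ℕ) : Prop :=
  FamCardEq (fun p : Fin n × Fin n => M p.1 p.2) c

/-!
Fix a representative for each of the `n + 1` phase classes. The entries of a row are pairwise
orthogonal, so a row meets `n` distinct classes and misses exactly one. If all representatives
were pairwise orthogonal, `ℋ_n` would contain `n + 1` orthonormal vectors. Otherwise two
non-orthogonal classes `a`, `b` never share a row, so every other class occurs in every row and
is orthogonal to all remaining classes. The representatives of `a` and `b` are then unit vectors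
orthogonal to the same `n - 1` orthonormal vectors, hence equal up to phase.
-/

open Function Set
open scoped InnerProductSpace

namespace PhaseEq

variable {E : Type*} [AddCommGroup E] [Module ℂ E] {u v w : E}

lemma symm (h : PhaseEq u v) : PhaseEq v u := by
  obtain ⟨θ, rfl⟩ := h
  refine ⟨-θ, ?_⟩
  rw [smul_smul, ← Complex.exp_add]
  push_cast
  simp

lemma trans (huv : PhaseEq u v) (hvw : PhaseEq v w) : PhaseEq u w := by
  obtain ⟨θ, rfl⟩ := huv
  obtain ⟨φ, rfl⟩ := hvw
  refine ⟨θ + φ, ?_⟩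
  rw [smul_smul, ← Complex.exp_add]
  push_cast
  ring_nf

lemma of_norm_eq_one {c : ℂ} (hc : ‖c‖ = 1) (v : E) : PhaseEq (c • v) v :=
  ⟨c.arg, by simpa [hc] using congrArg (· • v) (Complex.norm_mul_exp_arg_mul_I c).symm⟩

end PhaseEq

section InnerProductSpace

variable {E : Type*} [NormedAddCommGroup E] [InnerProductSpace ℂ E]

lemma PhaseEq.norm_eq {u v : E} (h : PhaseEq u v) : ‖u‖ = ‖v‖ := by
  obtain ⟨θ, rfl⟩ := h
  simp [norm_smul, Complex.norm_exp]

lemma PhaseEq.inner_eq_zero {u u' v v' : E} (hu : PhaseEq u u') (hv : PhaseEq v v')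
    (h : ⟪u, v⟫_ℂ = 0) : ⟪u', v'⟫_ℂ = 0 := by
  obtain ⟨θ, rfl⟩ := hu
  obtain ⟨φ, rfl⟩ := hv
  simpa [inner_smul_left, inner_smul_right, Complex.exp_ne_zero] using h

lemma Orthonormal.of_phaseEq {ι : Type*} {f g : ι → E} (hf : Orthonormal ℂ f)
    (hfg : ∀ i, PhaseEq (f i) (g i)) : Orthonormal ℂ g :=
  ⟨fun i => (hfg i).norm_eq ▸ hf.1 i,
    fun _ _ hij => (hfg _).inner_eq_zero (hfg _) (hf.2 hij)⟩

lemma Orthonormal.phaseEq_of_inner_eq_zero {ι : Type*} [Fintype ι] {f : ι → E}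
    (hf : Orthonormal ℂ f) (hcard : Fintype.card ι = Module.finrank ℂ E) {v : E}
    (hv : ‖v‖ = 1) {i₀ : ι} (horth : ∀ i, i ≠ i₀ → ⟪f i, v⟫_ℂ = 0) :
    PhaseEq v (f i₀) := by
  have : Nonempty ι := ⟨i₀⟩
  let b : OrthonormalBasis ι ℂ E :=
    .mk hf (hf.linearIndependent.span_eq_top_of_card_eq_finrank hcard).ge
  have hb : ⇑b = f := OrthonormalBasis.coe_mk _ _
  have hv_eq : v = ⟪f i₀, v⟫_ℂ • f i₀ := calc
    v = ∑ i, ⟪f i, v⟫_ℂ • f i := hb ▸ (b.sum_repr' v).symm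
    _ = ⟪f i₀, v⟫_ℂ • f i₀ := Finset.sum_eq_single i₀
      (fun i _ hi => by rw [horth i hi, zero_smul]) (fun h => absurd (Finset.mem_univ i₀) h)
  have hc : ‖⟪f i₀, v⟫_ℂ‖ = 1 := by
    simpa [hv, hf.1 i₀, norm_smul] using (congrArg norm hv_eq).symm
  exact hv_eq ▸ PhaseEq.of_norm_eq_one hc (f i₀)

lemma phaseEq_of_inner_eq_zero_of_ne_of_ne {κ : Type*} [Fintype κ] {v : κ → E}
    (hv : ∀ k, ‖v k‖ = 1) (hcard : Fintype.card κ = Module.finrank ℂ E + 1) {a b : κ}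
    (hab : a ≠ b) (horth : ∀ k, k ≠ a → k ≠ b → ∀ m, m ≠ k → ⟪v k, v m⟫_ℂ = 0) :
    PhaseEq (v b) (v a) := by
  classical
  have hon : Orthonormal ℂ (fun k : {k // k ≠ b} => v k) := by
    refine ⟨fun k => hv k, fun k m hkm => ?_⟩
    have hkm' : (k : κ) ≠ m := Subtype.coe_injective.ne hkm
    by_cases hka : (k : κ) = a
    · exact inner_eq_zero_symm.mp <| horth m (hka ▸ hkm'.symm) m.2 k hkm'
    · exact horth k hka k.2 m hkm'.symm
  have hcard' : Fintype.card {k // k ≠ b} = Module.finrank ℂ E := by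
    simp [Fintype.card_subtype_compl, hcard]
  refine hon.phaseEq_of_inner_eq_zero hcard' (hv b) (i₀ := ⟨a, hab⟩) fun k hk => ?_
  exact horth k (fun h => hk (Subtype.ext h)) k.2 b k.2.symm

end InnerProductSpace

lemma mem_range_of_ne_of_ne {γ κ : Type*} [Fintype γ] [Fintype κ] {f : γ → κ}
    (hf : Injective f) (hcard : Fintype.card κ = Fintype.card γ + 1) {a b k : κ}
    (hab : a ∉ range f ∨ b ∉ range f) (hka : k ≠ a) (hkb : k ≠ b) : k ∈ range f := by
  classical
  have hcompl : (Finset.univ.image f)ᶜ.card = 1 := by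
    rw [Finset.card_compl, Finset.card_image_of_injective _ hf, hcard, Finset.card_univ,
      Nat.add_sub_cancel_left]
  by_contra hk
  have hmissed : ∀ x ∉ range f, x ∈ (Finset.univ.image f)ᶜ := fun x hx => by simpa using hx
  rcases hab with h | h
  · exact hka (Finset.card_le_one.mp hcompl.le k (hmissed k hk) a (hmissed a h))
  · exact hkb (Finset.card_le_one.mp hcompl.le k (hmissed k hk) b (hmissed b h))

theorem no_qls_card_succ_general (n : ℕ)
    (M : Fin n → Fin n → Hs n) (hM : IsQLS M) : ¬ CardEq M (n + 1) := by
  rintro ⟨reps, hcover, hhit, hdistinct⟩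
  choose cls hcls using fun i j => hcover (i, j)
  have hrow : ∀ i, Orthonormal ℂ (reps ∘ cls i) := fun i => (hM.1 i).of_phaseEq (hcls i)
  have hsurj : ∀ k, ∃ i j, cls i j = k := fun k => by
    obtain ⟨⟨i, j⟩, hk⟩ := hhit k
    exact ⟨i, j, by_contra fun hne => hdistinct _ _ hne ((hcls i j).symm.trans hk)⟩
  have hunit : ∀ k, ‖reps k‖ = 1 := fun k => by
    obtain ⟨i, j, rfl⟩ := hsurj k
    exact (hrow i).1 j
  by_cases horth : Orthonormal ℂ reps
  · simpa using horth.linearIndependent.fintype_card_le_finrank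
  obtain ⟨a, b, hab, hnz⟩ : ∃ a b, a ≠ b ∧ ⟪reps a, reps b⟫_ℂ ≠ 0 := by
    simpa [Orthonormal, hunit, Pairwise] using horth
  have hapart : ∀ i, a ∉ range (cls i) ∨ b ∉ range (cls i) := by
    intro i
    by_contra! ⟨⟨j, rfl⟩, ⟨j', rfl⟩⟩
    exact hnz ((hrow i).2 fun h => hab (congrArg _ h))
  refine hdistinct b a hab.symm (phaseEq_of_inner_eq_zero_of_ne_of_ne hunit (by simp) hab ?_)
  intro k hka hkb m hmk
  obtain ⟨i, j, rfl⟩ := hsurj m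
  obtain ⟨j', rfl⟩ := mem_range_of_ne_of_ne (hrow i).linearIndependent.injective.of_comp
    (by simp) (hapart i) hka hkb
  exact (hrow i).2 fun h => hmk (congrArg _ h).symm

/-- For any integer `n ≥ 2`, there is no quantum Latin square of order `n`
with cardinality `n + 1`. -/
theorem no_qls_card_succ (n : ℕ) (hn : 2 ≤ n)
    (M : Fin n → Fin n → Hs n) (hM : IsQLS M) : ¬ CardEq M (n + 1) :=
  no_qls_card_succ_general n M hM
end
end

section
/- For any real numbers c, d, x, y, the 4×4 block matrix with A_c and A_d on the diagonal blocks and B_x, B_y on the off-diagonal blocks is a quantum Latin square of order 4 in ℋ_2⊗ℋ_2, where A_a is the 2×2 array ((|00⟩+a|01⟩, −a|00⟩+|01⟩), (−a|00⟩+|01⟩, |00⟩+a|01⟩))/√(1+a²) and B_a is the analogous array built from |10⟩, |11⟩. -/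
noncomputable section

/-- `ℋ₂ ⊗ ℋ₂`, with orthonormal basis `|00⟩, |01⟩, |10⟩, |11⟩`. -/
abbrev H4 := EuclideanSpace ℂ (Fin 4)

/-- `|00⟩, |01⟩, |10⟩, |11⟩` (in this order). -/
def e4 : Fin 4 → H4 := fun i => EuclideanSpace.single i 1

/-- The 2×2 array `A_a` built on `|00⟩, |01⟩`. -/
def Aarr (a : ℝ) : Fin 2 → Fin 2 → H4 := fun i j =>
  ((Real.sqrt (1 + a ^ 2) : ℝ)⁻¹ : ℂ) •
    (if i = j then e4 0 + (a : ℂ) • e4 1 else (-(a : ℂ)) • e4 0 + e4 1)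

/-- The 2×2 array `B_a` built on `|10⟩, |11⟩`. -/
def Barr (a : ℝ) : Fin 2 → Fin 2 → H4 := fun i j =>
  ((Real.sqrt (1 + a ^ 2) : ℝ)⁻¹ : ℂ) •
    (if i = j then e4 2 + (a : ℂ) • e4 3 else (-(a : ℂ)) • e4 2 + e4 3)

/-- A quantum Latin square of order 4: rows and columns are orthonormal bases. -/
def IsQLS4 (M : Fin 4 → Fin 4 → H4) : Prop :=
  (∀ i, Orthonormal ℂ (fun j => M i j)) ∧ (∀ j, Orthonormal ℂ (fun i => M i j))

/-- The 4×4 block matrix with diagonal blocks `A_c, A_d` and off-diagonal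
blocks `B_x, B_y`. -/
def blockQLS (c d x y : ℝ) : Fin 4 → Fin 4 → H4 := fun i j =>
  Matrix.reindex finSumFinEquiv finSumFinEquiv
    (Matrix.fromBlocks (Matrix.of (Aarr c)) (Matrix.of (Barr x))
      (Matrix.of (Barr y)) (Matrix.of (Aarr d))) i j

/-!
`A_a` places the vectors `(|00⟩ + a|01⟩)/√(1+a²)` and `(-a|00⟩ + |01⟩)/√(1+a²)`, a rotation of
the orthonormal pair `|00⟩, |01⟩`, in a symmetric 2×2 Latin pattern, so each of its rows and
columns is an orthonormal basis of `span{|00⟩, |01⟩}`; likewise `B_a` for `span{|10⟩, |11⟩}`.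
These spans are orthogonal, and each row of the block matrix is a row of an `A` block followed by
a row of a `B` block, hence orthonormal. The blocks being symmetric, transposing the block matrix
only swaps `x` and `y`, so the columns reduce to the rows.
-/

open Matrix
open scoped InnerProductSpace

section Rotation

variable {𝕜 E : Type*} [RCLike 𝕜] [NormedAddCommGroup E] [InnerProductSpace 𝕜 E]

theorem Orthonormal.sumElim {ι κ : Type*} {f : ι → E} {g : κ → E} (hf : Orthonormal 𝕜 f)
    (hg : Orthonormal 𝕜 g) (hfg : ∀ i j, ⟪f i, g j⟫_𝕜 = 0) : Orthonormal 𝕜 (Sum.elim f g) := by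
  refine ⟨fun i => ?_, ?_⟩
  · cases i <;> simp [hf.1, hg.1]
  · rintro (i | i) (j | j) hij
    · exact hf.2 fun h => hij (congrArg _ h)
    · exact hfg i j
    · exact inner_eq_zero_symm.1 (hfg j i)
    · exact hg.2 fun h => hij (congrArg _ h)

theorem Orthonormal.normalizedRotation {p q : E} (h : Orthonormal 𝕜 ![p, q]) (a : ℝ) :
    Orthonormal 𝕜 ![(√(1 + a ^ 2) : 𝕜)⁻¹ • (p + (a : 𝕜) • q),
      (√(1 + a ^ 2) : 𝕜)⁻¹ • (-(a : 𝕜) • p + q)] := by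
  have hpp : ⟪p, p⟫_𝕜 = 1 := by simpa using orthonormal_iff_ite.1 h 0 0
  have hqq : ⟪q, q⟫_𝕜 = 1 := by simpa using orthonormal_iff_ite.1 h 1 1
  have hpq : ⟪p, q⟫_𝕜 = 0 := by simpa using orthonormal_iff_ite.1 h 0 1
  have hqp : ⟪q, p⟫_𝕜 = 0 := by simpa using orthonormal_iff_ite.1 h 1 0
  have hr : ((√(1 + a ^ 2) : 𝕜)⁻¹ * (√(1 + a ^ 2) : 𝕜)⁻¹ * (1 + (a : 𝕜) ^ 2)) = 1 := by
    have : (√(1 + a ^ 2))⁻¹ * (√(1 + a ^ 2))⁻¹ * (1 + a ^ 2) = 1 := by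
      rw [← mul_inv, Real.mul_self_sqrt (by positivity), inv_mul_cancel₀ (by positivity)]
    exact_mod_cast this
  rw [orthonormal_iff_ite]
  intro i j
  fin_cases i <;> fin_cases j <;>
    simp only [Fin.zero_eta, Fin.mk_one, cons_val_zero, cons_val_one, inner_add_left,
      inner_add_right, inner_smul_left, inner_smul_right, map_neg, map_inv₀, RCLike.conj_ofReal,
      hpp, hqq, hpq, hqp, zero_ne_one, one_ne_zero, if_true, if_false]
  all_goals first | linear_combination hr | ring

theorem orthonormal_fromBlocks_row {l m n o : Type*} {A : Matrix n l E} {B : Matrix n m E}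
    {C : Matrix o l E} {D : Matrix o m E} (hA : ∀ i, Orthonormal 𝕜 (A i))
    (hB : ∀ i, Orthonormal 𝕜 (B i)) (hC : ∀ i, Orthonormal 𝕜 (C i))
    (hD : ∀ i, Orthonormal 𝕜 (D i)) (hAB : ∀ i j k, ⟪A i j, B i k⟫_𝕜 = 0)
    (hCD : ∀ i j k, ⟪C i j, D i k⟫_𝕜 = 0) (i : n ⊕ o) :
    Orthonormal 𝕜 (fromBlocks A B C D i) := by
  cases i with
  | inl i => exact (hA i).sumElim (hB i) (hAB i)
  | inr i => exact (hC i).sumElim (hD i) (hCD i)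

theorem orthonormal_ite_of_orthonormal_pair {u v : E} (h : Orthonormal 𝕜 ![u, v]) (i : Fin 2) :
    Orthonormal 𝕜 (fun j => if i = j then u else v) := by
  have : (fun j => if i = j then u else v) = ![u, v] ∘ Equiv.swap 0 i := by
    funext j; fin_cases i <;> fin_cases j <;> rfl
  rw [this]
  exact h.comp _ (Equiv.injective _)

variable (𝕜) in
def rotationArray (p q : E) (a : ℝ) : Fin 2 → Fin 2 → E := fun i j =>
  (√(1 + a ^ 2) : 𝕜)⁻¹ • (if i = j then p + (a : 𝕜) • q else (-(a : 𝕜)) • p + q)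

theorem transpose_of_rotationArray (p q : E) (a : ℝ) :
    (of (rotationArray 𝕜 p q a))ᵀ = of (rotationArray 𝕜 p q a) := by
  ext i j
  simp only [transpose_apply, of_apply, rotationArray, @eq_comm _ j]

theorem orthonormal_rotationArray_row {p q : E} (h : Orthonormal 𝕜 ![p, q]) (a : ℝ)
    (i : Fin 2) : Orthonormal 𝕜 (rotationArray 𝕜 p q a i) := by
  have := orthonormal_ite_of_orthonormal_pair (h.normalizedRotation a) i
  simp only [← smul_ite] at this
  exact this

theorem inner_rotationArray_eq_zero {p q s t : E} (h : Orthonormal 𝕜 ![p, q, s, t]) (a b : ℝ)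
    (i j k l : Fin 2) : ⟪rotationArray 𝕜 p q a i j, rotationArray 𝕜 s t b k l⟫_𝕜 = 0 := by
  have hps : ⟪p, s⟫_𝕜 = 0 := h.2 (by decide : (0 : Fin 4) ≠ 2)
  have hpt : ⟪p, t⟫_𝕜 = 0 := h.2 (by decide : (0 : Fin 4) ≠ 3)
  have hqs : ⟪q, s⟫_𝕜 = 0 := h.2 (by decide : (1 : Fin 4) ≠ 2)
  have hqt : ⟪q, t⟫_𝕜 = 0 := h.2 (by decide : (1 : Fin 4) ≠ 3)
  unfold rotationArray
  split_ifs <;>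
    simp [inner_add_left, inner_add_right, inner_smul_left, inner_smul_right, hps, hpt, hqs, hqt]

theorem Orthonormal.pair_of_quadruple {p q s t : E} (h : Orthonormal 𝕜 ![p, q, s, t]) :
    Orthonormal 𝕜 ![p, q] ∧ Orthonormal 𝕜 ![s, t] := by
  constructor
  · convert h.comp ![0, 1] (by decide) using 1
    funext i; fin_cases i <;> rfl
  · convert h.comp ![2, 3] (by decide) using 1
    funext i; fin_cases i <;> rfl

variable (𝕜) in
def rotationBlocks (p q s t : E) (c d x y : ℝ) : Matrix (Fin 2 ⊕ Fin 2) (Fin 2 ⊕ Fin 2) E :=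
  fromBlocks (of (rotationArray 𝕜 p q c)) (of (rotationArray 𝕜 s t x))
    (of (rotationArray 𝕜 s t y)) (of (rotationArray 𝕜 p q d))

theorem rotationBlocks_transpose (p q s t : E) (c d x y : ℝ) :
    (rotationBlocks 𝕜 p q s t c d x y)ᵀ = rotationBlocks 𝕜 p q s t c d y x := by
  simp only [rotationBlocks, fromBlocks_transpose, transpose_of_rotationArray]

theorem orthonormal_rotationBlocks_row {p q s t : E} (h : Orthonormal 𝕜 ![p, q, s, t])
    (c d x y : ℝ) (i : Fin 2 ⊕ Fin 2) : Orthonormal 𝕜 (rotationBlocks 𝕜 p q s t c d x y i) := by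
  obtain ⟨hpq, hst⟩ := h.pair_of_quadruple
  exact orthonormal_fromBlocks_row (orthonormal_rotationArray_row hpq c)
    (orthonormal_rotationArray_row hst x) (orthonormal_rotationArray_row hst y)
    (orthonormal_rotationArray_row hpq d)
    (fun _ _ _ => inner_rotationArray_eq_zero h _ _ _ _ _ _)
    (fun _ _ _ => inner_eq_zero_symm.1 (inner_rotationArray_eq_zero h _ _ _ _ _ _)) i

end Rotation

theorem orthonormal_e4 : Orthonormal ℂ ![e4 0, e4 1, e4 2, e4 3] := by
  convert EuclideanSpace.orthonormal_single (𝕜 := ℂ) (ι := Fin 4) using 1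
  funext i; fin_cases i <;> rfl

theorem blockQLS_eq_reindex_rotationBlocks (c d x y : ℝ) :
    blockQLS c d x y = reindex finSumFinEquiv finSumFinEquiv
      (rotationBlocks ℂ (e4 0) (e4 1) (e4 2) (e4 3) c d x y) := rfl

/-- For any real `c, d, x, y`, the block matrix `(A_c, B_x; B_y, A_d)` is a
quantum Latin square of order 4 in `ℋ₂ ⊗ ℋ₂`. -/
theorem blockQLS_is_qls (c d x y : ℝ) : IsQLS4 (blockQLS c d x y) := by
  rw [IsQLS4, blockQLS_eq_reindex_rotationBlocks]
  refine ⟨fun i => ?_, fun j => ?_⟩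
  · exact (orthonormal_rotationBlocks_row orthonormal_e4 c d x y _).comp _
      finSumFinEquiv.symm.injective
  · have hcol := orthonormal_rotationBlocks_row orthonormal_e4 c d y x (finSumFinEquiv.symm j)
    rw [← rotationBlocks_transpose] at hcol
    exact hcol.comp _ finSumFinEquiv.symm.injective
end
end

section
/- Let U be an m×n row-quantum Latin rectangle in ℋ_n and V an n×m row-quantum Latin rectangle in ℋ_m, with entries u_{i,j} and v_{k,l} respectively. Then the mn×mn array W whose entry in position (row k, column l) of the (i,j)-th n×m block is w_{i,j;k,l} = u_{i, j+k mod n} ⊗ v_{j, i+l mod m} is a quantum Latin square of order mn. -/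
/-! Since `⟪u ⊗ v, u' ⊗ v'⟫ = ⟪u, u'⟫ ⟪v, v'⟫`, a family of tensor products is orthonormal as
soon as one factor is orthonormal in one index and, for each value of that index, the other
factor is orthonormal in the remaining index. In a row `(i, k)` of `W` the first factor
`u_{i, j+k}` depends only on `j` and `v_{j, i+l}` is orthonormal in `l`; in a column `(j, l)`
the second factor `v_{j, i+l}` depends only on `i` and `u_{i, j+k}` is orthonormal in `k`. -/

noncomputable section

/-- Concrete tensor product `u ⊗ v` of Euclidean space vectors. -/
def tens {ι κ : Type*} (u : EuclideanSpace ℂ ι) (v : EuclideanSpace ℂ κ) :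
    EuclideanSpace ℂ (ι × κ) :=
  (WithLp.equiv 2 _).symm (fun p : ι × κ => u p.1 * v p.2)

/-- An array (with arbitrary finite index types) all of whose rows and columns
are orthonormal families. -/
def IsQLSIdx {ι κ E : Type*} [NormedAddCommGroup E] [InnerProductSpace ℂ E]
    (M : ι → κ → E) : Prop :=
  (∀ i, Orthonormal ℂ (fun j => M i j)) ∧ (∀ j, Orthonormal ℂ (fun i => M i j))

section Tensor

variable {ι κ α β : Type*} [Fintype ι] [Fintype κ]

theorem inner_tens (u u' : EuclideanSpace ℂ ι) (v v' : EuclideanSpace ℂ κ) :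
    inner ℂ (tens u v) (tens u' v') = inner ℂ u u' * inner ℂ v v' := by
  simp only [tens, PiLp.inner_apply, RCLike.inner_apply, WithLp.equiv_symm_apply,
    Fintype.sum_prod_type, map_mul, Finset.sum_mul_sum]
  exact Finset.sum_congr rfl fun _ _ => Finset.sum_congr rfl fun _ _ => mul_mul_mul_comm _ _ _ _

theorem orthonormal_tens_of_left {x : α → EuclideanSpace ℂ ι} {y : α → β → EuclideanSpace ℂ κ}
    (hx : Orthonormal ℂ x) (hy : ∀ a, Orthonormal ℂ (y a)) :
    Orthonormal ℂ fun p : α × β => tens (x p.1) (y p.1 p.2) := by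
  classical
  rw [orthonormal_iff_ite]
  rintro ⟨a, b⟩ ⟨a', b'⟩
  rw [inner_tens, orthonormal_iff_ite.mp hx]
  by_cases ha : a = a'
  · subst ha
    simp [orthonormal_iff_ite.mp (hy a)]
  · simp [ha]

theorem orthonormal_tens_of_right {x : α → β → EuclideanSpace ℂ ι} {y : α → EuclideanSpace ℂ κ}
    (hx : ∀ a, Orthonormal ℂ (x a)) (hy : Orthonormal ℂ y) :
    Orthonormal ℂ fun p : α × β => tens (x p.1 p.2) (y p.1) := by
  classical
  rw [orthonormal_iff_ite]
  rintro ⟨a, b⟩ ⟨a', b'⟩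
  rw [inner_tens, orthonormal_iff_ite.mp hy]
  by_cases ha : a = a'
  · subst ha
    simp [orthonormal_iff_ite.mp (hx a)]
  · simp [ha]

end Tensor

/-- Product construction: if `U` is an `m×n` row-quantum Latin rectangle in
`ℋ_n` and `V` an `n×m` row-quantum Latin rectangle in `ℋ_m`, then the
`mn × mn` array `W` with entry `u_{i, j+k} ⊗ v_{j, i+l}` at row `(i,k)` and
column `(j,l)` (sums mod `n` resp. mod `m`) is a quantum Latin square of
order `mn`. -/
theorem product_construction_is_qls (m n : ℕ)
    (U : Fin m → Fin n → EuclideanSpace ℂ (Fin n))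
    (V : Fin n → Fin m → EuclideanSpace ℂ (Fin m))
    (hU : ∀ i, Orthonormal ℂ (fun j => U i j))
    (hV : ∀ j, Orthonormal ℂ (fun l => V j l)) :
    IsQLSIdx (fun (r : Fin m × Fin n) (c : Fin n × Fin m) =>
      tens (U r.1 (c.1 + r.2)) (V c.1 (r.1 + c.2))) :=
  ⟨fun r => orthonormal_tens_of_left (x := fun j => U r.1 (j + r.2))
      (y := fun j l => V j (r.1 + l))
      ((hU r.1).comp _ (add_left_injective r.2)) fun j => (hV j).comp _ (add_right_injective r.1),
    fun c => orthonormal_tens_of_right (x := fun i k => U i (c.1 + k))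
      (y := fun i => V c.1 (i + c.2))
      (fun i => (hU i).comp _ (add_right_injective c.1)) ((hV c.1).comp _ (add_left_injective c.2))⟩
end
end
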